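/- For real x, y with y > 0 and y < 2x, the asymptotic relation ₂F₁(x,x;y;r) ~ (Γ(y)Γ(2x−y)/Γ(x)²) (1−r)^{y−2x} holds as r → 1⁻. -/

import Mathlib

/-!
The `k`-th coefficient of `₂F₁(x, x; y; ·)` is `(x)ₖ² / ((y)ₖ k!)`. By Gauss's limit formula for `Γ`
it is asymptotic to `L (s)ₖ / k!`, where `s = 2x - y` and `L = Γ(y)Γ(s)/Γ(x)²`, and these are `L`
times the coefficients of the binomial series of `(1 - r)^(-s)`, which tends to `∞` as `r → 1⁻`.
For power series with nonnegative coefficients whose sum diverges at `1`, asymptotic equivalence of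
the coefficients passes to the sums, since any finite set of terms is swamped by the divergent sum.
-/

open Real Filter

/-- The real Gauss hypergeometric function `₂F₁(a, b; c; x)`, defined by its power
series. -/
noncomputable def hyp2F1 (a b c x : ℝ) : ℝ :=
  ∑' k : ℕ, ((ascPochhammer ℝ k).eval a * (ascPochhammer ℝ k).eval b /
    ((ascPochhammer ℝ k).eval c * (k.factorial : ℝ))) * x ^ k

open Topology Asymptotics Set
open scoped Nat

section PowerSeriesRatio

variable {b c : ℕ → ℝ}

lemma summable_mul_pow_of_isBigO {r : ℝ} (hc : c =O[atTop] b)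
    (hb : Summable fun k ↦ b k * r ^ k) : Summable fun k ↦ c k * r ^ k := by
  exact summable_of_isBigO_nat hb (hc.mul (isBigO_refl _ _))

lemma abs_tsum_mul_pow_le {N : ℕ} {ε r : ℝ} (hb : ∀ k, 0 ≤ b k) (hε : 0 ≤ ε)
    (hN : ∀ k ≥ N, |c k| ≤ ε * b k) (hr₀ : 0 ≤ r) (hr₁ : r ≤ 1)
    (hsb : Summable fun k ↦ b k * r ^ k) :
    |∑' k, c k * r ^ k| ≤ ∑ k ∈ Finset.range N, |c k| + ε * ∑' k, b k * r ^ k := by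
  set head : ℕ → ℝ := fun k ↦ if k < N then |c k| else 0
  have hhead : HasSum head (∑ k ∈ Finset.range N, |c k|) := by
    rw [Finset.sum_congr rfl fun k hk ↦ (if_pos (Finset.mem_range.mp hk)).symm]
    exact hasSum_sum_of_ne_finset_zero fun k hk ↦ if_neg (by simpa using hk)
  refine tsum_of_norm_bounded (E := ℝ) (hhead.add (hsb.hasSum.mul_left ε)) fun k ↦ ?_
  have hrk : 0 ≤ r ^ k := pow_nonneg hr₀ k
  rw [Real.norm_eq_abs, abs_mul, abs_of_nonneg hrk]
  by_cases hk : k < N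
  · simp only [head, if_pos hk]
    have : 0 ≤ ε * (b k * r ^ k) := mul_nonneg hε (mul_nonneg (hb k) hrk)
    nlinarith [pow_le_one₀ hr₀ hr₁ (n := k), abs_nonneg (c k)]
  · simp only [head, if_neg hk, zero_add, ← mul_assoc]
    gcongr
    exact hN k (not_lt.mp hk)

lemma isLittleO_tsum_mul_pow {B : ℝ → ℝ} (hb : ∀ k, 0 ≤ b k) (hc : c =o[atTop] b)
    (hB : ∀ r ∈ Ioo (0 : ℝ) 1, HasSum (fun k ↦ b k * r ^ k) (B r))
    (hB_top : Tendsto B (𝓝[<] 1) atTop) :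
    (fun r ↦ ∑' k, c k * r ^ k) =o[𝓝[<] 1] B := by
  refine isLittleO_iff.mpr fun ε hε ↦ ?_
  obtain ⟨N, hN⟩ := eventually_atTop.mp (hc.bound (half_pos hε))
  set M := ∑ k ∈ Finset.range N, |c k|
  filter_upwards [hB_top.eventually_ge_atTop (M / (ε / 2)), Ioo_mem_nhdsLT (zero_lt_one' ℝ)]
    with r hMB hr
  have hN' : ∀ k ≥ N, |c k| ≤ ε / 2 * b k := fun k hk ↦ by
    simpa [abs_of_nonneg (hb k)] using hN k hk
  have hB₀ : 0 ≤ B r := (hB r hr).nonneg fun k ↦ mul_nonneg (hb k) (pow_nonneg hr.1.le k)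
  have hM : M ≤ ε / 2 * B r := by rwa [div_le_iff₀' (half_pos hε)] at hMB
  have hc_le := abs_tsum_mul_pow_le hb (half_pos hε).le hN' hr.1.le hr.2.le (hB r hr).summable
  rw [(hB r hr).tsum_eq] at hc_le
  rw [Real.norm_eq_abs, Real.norm_eq_abs, abs_of_nonneg hB₀]
  linarith

theorem Asymptotics.IsEquivalent.tsum_mul_pow {a : ℕ → ℝ} {B : ℝ → ℝ} (hb : ∀ k, 0 ≤ b k)
    (hab : a ~[atTop] b) (hB : ∀ r ∈ Ioo (0 : ℝ) 1, HasSum (fun k ↦ b k * r ^ k) (B r))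
    (hB_top : Tendsto B (𝓝[<] 1) atTop) :
    (fun r ↦ ∑' k, a k * r ^ k) ~[𝓝[<] 1] B := by
  refine (isLittleO_tsum_mul_pow hb hab.isLittleO hB hB_top).congr' ?_ EventuallyEq.rfl
  filter_upwards [Ioo_mem_nhdsLT (zero_lt_one' ℝ)] with r hr
  have hsa := summable_mul_pow_of_isBigO hab.isBigO (hB r hr).summable
  simp only [Pi.sub_apply, sub_mul, ← (hB r hr).tsum_eq]
  exact hsa.tsum_sub (hB r hr).summable

end PowerSeriesRatio

theorem ascPochhammer_eval_eq_prod_range {R : Type*} [CommSemiring R] (n : ℕ) (t : R) :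
    (ascPochhammer R n).eval t = ∏ j ∈ Finset.range n, (t + j) := by
  induction n with
  | zero => simp
  | succ n ih => simp [ascPochhammer_succ_right, ih, Finset.prod_range_succ]

theorem Real.GammaSeq_eq_div_ascPochhammer (t : ℝ) (n : ℕ) :
    GammaSeq t n = n ^ t * n ! / (ascPochhammer ℝ (n + 1)).eval t := by
  rw [GammaSeq, ascPochhammer_eval_eq_prod_range]

theorem tendsto_ascPochhammer_sq_div_mul {x y s : ℝ} (hx : 0 < x) (hy : 0 < y) (hs : 0 < s)
    (h : y + s = 2 * x) :
    Tendsto (fun n : ℕ ↦ (ascPochhammer ℝ n).eval x ^ 2 /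
        ((ascPochhammer ℝ n).eval y * (ascPochhammer ℝ n).eval s))
      atTop (𝓝 (Gamma y * Gamma s / Gamma x ^ 2)) := by
  rw [← tendsto_add_atTop_iff_nat 1]
  refine (((GammaSeq_tendsto_Gamma y).mul (GammaSeq_tendsto_Gamma s)).div
    ((GammaSeq_tendsto_Gamma x).pow 2) (pow_ne_zero 2 (Gamma_pos_of_pos hx).ne')).congr' ?_
  filter_upwards [eventually_gt_atTop 0] with n hn
  have hn : (0 : ℝ) < n := Nat.cast_pos.mpr hn
  have hpow : (n : ℝ) ^ y * (n : ℝ) ^ s = ((n : ℝ) ^ x) ^ 2 := by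
    rw [← rpow_add hn, h, ← rpow_natCast, ← rpow_mul hn.le, mul_comm]
    norm_num
  have := ascPochhammer_pos (n + 1) x hx
  have := ascPochhammer_pos (n + 1) y hy
  have := ascPochhammer_pos (n + 1) s hs
  simp only [GammaSeq_eq_div_ascPochhammer, Pi.div_apply]
  field_simp
  linear_combination hpow

theorem Ring.choose_add_sub_one_eq_ascPochhammer_div (s : ℝ) (n : ℕ) :
    Ring.choose (s + n - 1) n = (ascPochhammer ℝ n).eval s / n ! := by
  rw [← Ring.multichoose_eq, eq_div_iff (by positivity), mul_comm, ← nsmul_eq_mul,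
    Ring.factorial_nsmul_multichoose_eq_ascPochhammer, Polynomial.ascPochhammer_smeval_eq_eval]

theorem hasSum_ascPochhammer_div_factorial_mul_pow (s : ℝ) {r : ℝ} (hr : |r| < 1) :
    HasSum (fun n ↦ (ascPochhammer ℝ n).eval s / n ! * r ^ n) ((1 - r) ^ (-s)) := by
  have := (one_div_one_sub_rpow_hasFPowerSeriesOnBall_zero s).hasSum (y := r)
    (by simpa [enorm_eq_nnnorm, ← NNReal.coe_lt_coe] using hr)
  rw [rpow_neg (by linarith [le_abs_self r]), inv_eq_one_div]
  simpa [FormalMultilinearSeries.ofScalars, Ring.choose_add_sub_one_eq_ascPochhammer_div] using this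

theorem tendsto_one_sub_rpow_neg_nhdsLT_one {s : ℝ} (hs : 0 < s) :
    Tendsto (fun r : ℝ ↦ (1 - r) ^ (-s)) (𝓝[<] 1) atTop := by
  have h : Tendsto (fun r : ℝ ↦ 1 - r) (𝓝[<] 1) (𝓝[>] 0) :=
    tendsto_nhdsWithin_iff.mpr
      ⟨by simpa using ((continuous_sub_left (1 : ℝ)).tendsto 1).mono_left nhdsWithin_le_nhds,
        eventually_mem_nhdsWithin.mono fun _ hr ↦ mem_Ioi.mpr (sub_pos.mpr hr)⟩
  exact (tendsto_rpow_neg_nhdsGT_zero (neg_neg_of_pos hs)).comp h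

noncomputable def hyp2F1Coeff (a b c : ℝ) (k : ℕ) : ℝ :=
  (ascPochhammer ℝ k).eval a * (ascPochhammer ℝ k).eval b / ((ascPochhammer ℝ k).eval c * k !)

theorem hyp2F1_eq_tsum (a b c r : ℝ) : hyp2F1 a b c r = ∑' k, hyp2F1Coeff a b c k * r ^ k := rfl

theorem Real.Gamma_mul_Gamma_div_Gamma_sq_pos {x y : ℝ} (hy : 0 < y) (hxy : y < 2 * x) :
    0 < Gamma y * Gamma (2 * x - y) / Gamma x ^ 2 := by
  have := Gamma_pos_of_pos hy
  have := Gamma_pos_of_pos (by linarith : 0 < 2 * x - y)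
  have := Gamma_pos_of_pos (by linarith : 0 < x)
  positivity

theorem isEquivalent_hyp2F1Coeff {x y : ℝ} (hy : 0 < y) (hxy : y < 2 * x) :
    hyp2F1Coeff x x y ~[atTop] fun k ↦
      Gamma y * Gamma (2 * x - y) / Gamma x ^ 2 * ((ascPochhammer ℝ k).eval (2 * x - y) / k !) := by
  have hx : 0 < x := by linarith
  have hs : 0 < 2 * x - y := by linarith
  have hL := Gamma_mul_Gamma_div_Gamma_sq_pos hy hxy
  refine isEquivalent_of_tendsto_one ?_
  have hlim := (tendsto_ascPochhammer_sq_div_mul hx hy hs (by ring)).div_const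
    (Gamma y * Gamma (2 * x - y) / Gamma x ^ 2)
  rw [div_self hL.ne'] at hlim
  refine hlim.congr fun k ↦ ?_
  have := ascPochhammer_pos k x hx
  have := ascPochhammer_pos k y hy
  have := ascPochhammer_pos k (2 * x - y) hs
  simp only [hyp2F1Coeff, Pi.div_apply]
  field_simp

/-- For `y > 0` and `y < 2x`,
`₂F₁(x, x; y; r) ~ (Γ(y)Γ(2x-y)/Γ(x)²) (1-r)^(y-2x)` as `r → 1⁻`. -/
theorem hyp2F1_asymp_pow (x y : ℝ) (hy : 0 < y) (hxy : y < 2 * x) :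
    Tendsto
      (fun r : ℝ => hyp2F1 x x y r /
        ((Real.Gamma y * Real.Gamma (2 * x - y) / (Real.Gamma x) ^ 2) *
          (1 - r) ^ (y - 2 * x)))
      (nhdsWithin 1 (Set.Iio 1)) (nhds 1) := by
  have hs : 0 < 2 * x - y := by linarith
  have hL := Gamma_mul_Gamma_div_Gamma_sq_pos hy hxy
  set L := Gamma y * Gamma (2 * x - y) / Gamma x ^ 2
  have hexp : y - 2 * x = -(2 * x - y) := by ring
  have hbinom : ∀ r ∈ Ioo (0 : ℝ) 1, HasSum
      (fun k ↦ L * ((ascPochhammer ℝ k).eval (2 * x - y) / k !) * r ^ k)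
      (L * (1 - r) ^ (y - 2 * x)) := fun r hr ↦ by
    simpa only [mul_assoc, hexp] using (hasSum_ascPochhammer_div_factorial_mul_pow (2 * x - y)
      (abs_lt.mpr ⟨by linarith [hr.1], hr.2⟩)).mul_left L
  have hequiv := (isEquivalent_hyp2F1Coeff hy hxy).tsum_mul_pow
    (fun k ↦ (mul_pos hL (div_pos (ascPochhammer_pos k _ hs) (by positivity))).le) hbinom
    (by simpa only [hexp] using (tendsto_one_sub_rpow_neg_nhdsLT_one hs).const_mul_atTop hL)
  simp_rw [hyp2F1_eq_tsum]
  refine (isEquivalent_iff_tendsto_one ?_).mp hequiv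
  filter_upwards [Ioo_mem_nhdsLT (zero_lt_one' ℝ)] with r hr
  exact (mul_pos hL (rpow_pos_of_pos (sub_pos.mpr hr.2) _)).ne'
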